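/- arXiv:2201.08352 — 2 statements merged into one kernel-verified Lean document; each statement's English description precedes it below -/
import Mathlib

section
/- Every point (x, y) with x = r·cos θ, y = r·sin θ, where r = sin(60° + θ/2)/sin(60° − θ/2) and 80° < θ < 90°, satisfies the cubic equation √3·x³ + x²(y − 2√3) + √3·x(y² + 1) + y³ − 2√3·y² − y = 0. -/
open Real

/-- Every point `(x, y)` with `x = r·cos θ`, `y = r·sin θ`, where
`r = sin(60° + θ/2)/sin(60° − θ/2)` and `80° < θ < 90°`, satisfies the cubic
`√3·x³ + x²(y − 2√3) + √3·x(y² + 1) + y³ − 2√3·y² − y = 0`. -/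
theorem stmt_10 (θ r x y : ℝ) (h1 : 4 * π / 9 < θ) (h2 : θ < π / 2)
    (hr : r = Real.sin (π / 3 + θ / 2) / Real.sin (π / 3 - θ / 2))
    (hx : x = r * Real.cos θ) (hy : y = r * Real.sin θ) :
    Real.sqrt 3 * x ^ 3 + x ^ 2 * (y - 2 * Real.sqrt 3)
      + Real.sqrt 3 * x * (y ^ 2 + 1)
      + y ^ 3 - 2 * Real.sqrt 3 * y ^ 2 - y = 0 := by
  have hπ := Real.pi_pos
  set s := Real.sin (θ/2) with hs
  set c := Real.cos (θ/2) with hc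
  set d := Real.sqrt 3 with hd
  have hd2 : d ^ 2 = 3 := Real.sq_sqrt (by norm_num)
  have hsc : s ^ 2 + c ^ 2 = 1 := Real.sin_sq_add_cos_sq _
  have hsin : Real.sin θ = 2 * s * c := by
    rw [hs, hc, ← Real.sin_two_mul]; ring_nf
  have hcos : Real.cos θ = c ^ 2 - s ^ 2 := by
    have h := Real.cos_two_mul (θ/2)
    rw [show 2*(θ/2) = θ by ring] at h
    rw [h]; rw [hs, hc] at hsc ⊢; nlinarith [hsc]
  have hsub : Real.sin (π / 3 - θ / 2) = (d * c - s) / 2 := by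
    rw [Real.sin_sub, Real.sin_pi_div_three, Real.cos_pi_div_three]; ring
  have hadd : Real.sin (π / 3 + θ / 2) = (d * c + s) / 2 := by
    rw [Real.sin_add, Real.sin_pi_div_three, Real.cos_pi_div_three]; ring
  have hpos : 0 < Real.sin (π / 3 - θ / 2) := by
    apply Real.sin_pos_of_pos_of_lt_pi <;> nlinarith
  have hne : d * c - s ≠ 0 := by
    rw [hsub] at hpos; intro h; rw [h] at hpos; norm_num at hpos
  rw [hsub, hadd] at hr
  have hrD : r * (d * c - s) = d * c + s := by
    rw [hr]; field_simp
  have key : (d*c+s)^2*(d*(c^2-s^2)+2*s*c) - 2*d*(d*c+s)*(d*c-s)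
      + (d*c-s)^2*(d*(c^2-s^2)-2*s*c) = 0 := by
    linear_combination (2*d*c^4 - 2*d*s^2*c^2 - 2*d*c^2)*hd2 + (6*d*c^2 - 2*d*s^2)*hsc
  have h2 : (d*c-s)^2 * (r^2*(d*Real.cos θ + Real.sin θ) - 2*d*r
      + (d*Real.cos θ - Real.sin θ)) = 0 := by
    linear_combination ((r*(d*c-s)+(d*c+s))*(d*Real.cos θ + Real.sin θ)
        - 2*d*(d*c-s))*hrD + key + d*((d*c+s)^2+(d*c-s)^2)*hcos
        + ((d*c+s)^2-(d*c-s)^2)*hsin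
  have hbr : r^2*(d*Real.cos θ + Real.sin θ) - 2*d*r
      + (d*Real.cos θ - Real.sin θ) = 0 := by
    rcases mul_eq_zero.mp h2 with h | h
    · exact absurd h (pow_ne_zero 2 hne)
    · exact h
  subst hx hy
  linear_combination r*hbr + (r^3*(d*Real.cos θ + Real.sin θ) - 2*d*r^2)
      * (Real.sin_sq_add_cos_sq θ)
end

section
/- Every point (x, y) with x = r·cos θ, y = r·sin θ, where r = sin(240° − 2θ)/sin(θ − 60°) and 80° < θ < 90°, satisfies the cubic equation √3·x³ − x²(y + √3) + x(√3·y² + 2y) + √3·y² − y³ = 0. -/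
open Real

/-- Every point `(x, y)` with `x = r·cos θ`, `y = r·sin θ`, where
`r = sin(240° − 2θ)/sin(θ − 60°)` and `80° < θ < 90°`, satisfies the cubic
`√3·x³ − x²(y + √3) + x(√3·y² + 2y) + √3·y² − y³ = 0`. -/
theorem stmt_11 (θ r x y : ℝ) (h1 : 4 * π / 9 < θ) (h2 : θ < π / 2)
    (hr : r = Real.sin (4 * π / 3 - 2 * θ) / Real.sin (θ - π / 3))
    (hx : x = r * Real.cos θ) (hy : y = r * Real.sin θ) :
    Real.sqrt 3 * x ^ 3 - x ^ 2 * (y + Real.sqrt 3)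
      + x * (Real.sqrt 3 * y ^ 2 + 2 * y)
      + Real.sqrt 3 * y ^ 2 - y ^ 3 = 0 := by
  have hπ := Real.pi_pos
  have hs : 0 < Real.sin (θ - π / 3) := by
    apply Real.sin_pos_of_pos_of_lt_pi
    · linarith
    · linarith
  have h4 : Real.sin (4 * π / 3 - 2 * θ) = Real.sin (2 * θ - π / 3) := by
    rw [show (4 * π / 3 - 2 * θ) = π - (2 * θ - π / 3) by ring, Real.sin_pi_sub]
  have hk : r * Real.sin (θ - π / 3) = Real.sin (2 * θ - π / 3) := by
    rw [hr, h4, div_mul_cancel₀ _ hs.ne']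
  have e1 : Real.sin (θ - π / 3) = Real.sin θ * (1 / 2) - Real.cos θ * (Real.sqrt 3 / 2) := by
    rw [Real.sin_sub, Real.cos_pi_div_three, Real.sin_pi_div_three]
  have e2 : Real.sin (2 * θ - π / 3)
      = (2 * Real.sin θ * Real.cos θ) * (1 / 2)
        - (Real.cos θ ^ 2 - Real.sin θ ^ 2) * (Real.sqrt 3 / 2) := by
    rw [Real.sin_sub, Real.sin_two_mul, Real.cos_two_mul', Real.cos_pi_div_three,
      Real.sin_pi_div_three]
  rw [e1, e2] at hk
  have hpy : Real.sin θ ^ 2 + Real.cos θ ^ 2 = 1 := Real.sin_sq_add_cos_sq θ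
  subst hx hy
  linear_combination (-(2 * r ^ 2)) * hk
    - (r ^ 3 * (Real.sin θ - Real.sqrt 3 * Real.cos θ)) * hpy
end
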